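/- Let A be a unital C*-algebra, let n ≥ 1 and k ≥ 1, and let M_n(A) denote the C*-algebra of n×n matrices over A. If Gen_k(M_n(A))_sa is dense in M_n(A)^k_sa, then Gen_{kn²}(A)_sa is dense in A^{kn²}_sa. Consequently, ⌈(gr(A)+1)/n²⌉ − 1 ≤ gr(A ⊗ M_n). -/
import Mathlib


/-- The entries of the tuple `a` generate `A` as a C*-algebra: the smallest closed
`*`-subalgebra of `A` containing them is `A` itself. -/
def Generates {A : Type*} [NonUnitalCStarAlgebra A] {k : ℕ} (a : Fin k → A) : Prop :=
  (NonUnitalStarAlgebra.adjoin ℂ (Set.range a)).topologicalClosure = ⊤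

/-- The entries of a tuple of `n × n` matrices over `A` generate `M_n(A)` as a C*-algebra:
the smallest closed `*`-subalgebra containing them is all of `M_n(A)`.  (The product topology
on `M_n(A)` agrees with the topology induced by the unique C*-norm.) -/
def MatGenerates {A : Type*} [CStarAlgebra A] {n k : ℕ}
    (a : Fin k → Matrix (Fin n) (Fin n) A) : Prop :=
  (NonUnitalStarAlgebra.adjoin ℂ (Set.range a)).topologicalClosure = ⊤

section Aux

variable {A : Type*} [CStarAlgebra A] {n k : ℕ}

noncomputable def reP (x : A) : A := (2:ℂ)⁻¹ • (x + star x)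
noncomputable def imP (x : A) : A := (-(2:ℂ)⁻¹ * Complex.I) • (x - star x)

lemma reP_sa (x : A) : IsSelfAdjoint (reP x) := by
  simp only [IsSelfAdjoint, reP, star_smul, star_add, star_star, Complex.star_def, map_inv₀,
    Complex.conj_ofNat]
  module

lemma imP_sa (x : A) : IsSelfAdjoint (imP x) := by
  simp only [IsSelfAdjoint, imP, star_smul, star_sub, star_star, Complex.star_def, map_mul,
    map_neg, map_inv₀, Complex.conj_ofNat, Complex.conj_I]
  module

lemma reP_add_I_smul_imP (x : A) : reP x + Complex.I • imP x = x := by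
  simp only [reP, imP, smul_smul]
  match_scalars <;> simp [Complex.ext_iff] <;> ring

lemma reP_of_sa {x : A} (hx : star x = x) : reP x = x := by
  simp only [reP, hx]
  match_scalars
  norm_num

lemma imP_of_sa {x : A} (hx : star x = x) : imP x = 0 := by
  simp [imP, hx]

lemma reP_mix {x y : A} (hx : star x = x) (hy : star y = y) :
    reP (x + Complex.I • y) = x := by
  simp only [reP, star_add, star_smul, hx, hy, Complex.star_def, Complex.conj_I]
  match_scalars <;> simp [Complex.ext_iff] <;> ring

lemma imP_mix {x y : A} (hx : star x = x) (hy : star y = y) :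
    imP (x + Complex.I • y) = y := by
  simp only [imP, star_add, star_smul, hx, hy, Complex.star_def, Complex.conj_I]
  match_scalars <;> simp [Complex.ext_iff] <;> ring

lemma star_mix {x y : A} (hx : star x = x) (hy : star y = y) :
    star (x + Complex.I • y) = x - Complex.I • y := by
  simp only [star_add, star_smul, hx, hy, Complex.star_def, Complex.conj_I, neg_smul]
  abel

/-- encoding of triples of indices -/
def encE (n k : ℕ) : (Fin k × Fin n) × Fin n ≃ Fin (k * n ^ 2) :=
  ((finProdFinEquiv.prodCongr (Equiv.refl (Fin n))).trans finProdFinEquiv).trans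
    (finCongr (by ring))

noncomputable def Phi (b : Fin k → Matrix (Fin n) (Fin n) A) (j : Fin (k * n ^ 2)) : A :=
  if ((((encE n k).symm j).1.2 : ℕ) ≤ (((encE n k).symm j).2 : ℕ)) then
    reP (b ((encE n k).symm j).1.1 ((encE n k).symm j).1.2 ((encE n k).symm j).2)
  else imP (b ((encE n k).symm j).1.1 ((encE n k).symm j).2 ((encE n k).symm j).1.2)

lemma Phi_apply (b : Fin k → Matrix (Fin n) (Fin n) A) (i : Fin k) (p q : Fin n) :
    Phi b (encE n k ((i, p), q)) =
      if ((p : ℕ) ≤ q) then reP (b i p q) else imP (b i q p) := by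
  simp [Phi, Equiv.symm_apply_apply]

lemma Phi_sa (b : Fin k → Matrix (Fin n) (Fin n) A) (j : Fin (k * n ^ 2)) :
    IsSelfAdjoint (Phi b j) := by
  unfold Phi
  split_ifs <;> [exact reP_sa _; exact imP_sa _]

lemma Phi_continuous :
    Continuous (Phi (A := A) (n := n) (k := k)) := by
  apply continuous_pi
  intro j
  unfold Phi reP imP
  split_ifs <;> fun_prop

noncomputable def Psi (a : Fin (k * n ^ 2) → A) (i : Fin k) :
    Matrix (Fin n) (Fin n) A := fun p q =>
  if ((p : ℕ) < q) then a (encE n k ((i, p), q)) + Complex.I • a (encE n k ((i, q), p))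
  else if p = q then a (encE n k ((i, p), q))
  else a (encE n k ((i, q), p)) - Complex.I • a (encE n k ((i, p), q))

lemma Psi_sa {a : Fin (k * n ^ 2) → A} (ha : ∀ j, IsSelfAdjoint (a j))
    (i : Fin k) : IsSelfAdjoint (Psi a i) := by
  have ha' : ∀ j, star (a j) = a j := ha
  rw [IsSelfAdjoint]
  ext p q
  rw [Matrix.star_apply]
  rcases lt_trichotomy (p : ℕ) (q : ℕ) with hpq | hpq | hpq
  · have h1 : ¬ ((q : ℕ) < (p : ℕ)) := by omega
    have h2 : q ≠ p := fun h => by simp [h] at hpq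
    simp only [Psi, hpq, h1, h2, if_true, if_false, if_neg h2, star_sub, star_smul, ha',
      Complex.star_def, Complex.conj_I, neg_smul, sub_neg_eq_add]
  · have h2 : p = q := Fin.ext hpq
    subst h2
    simp [Psi, ha']
  · have h1 : ¬ ((p : ℕ) < (q : ℕ)) := by omega
    have h2 : p ≠ q := fun h => by simp [h] at hpq
    simp only [Psi, hpq, h1, h2, if_true, if_false, if_neg h2, star_add, star_smul, ha',
      Complex.star_def, Complex.conj_I, neg_smul, sub_neg_eq_add]
    abel

lemma Phi_Psi {a : Fin (k * n ^ 2) → A} (ha : ∀ j, IsSelfAdjoint (a j)) :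
    Phi (Psi a) = a := by
  have ha' : ∀ j, star (a j) = a j := ha
  funext j
  obtain ⟨⟨⟨i, p⟩, q⟩, rfl⟩ : ∃ x, encE n k x = j := ⟨(encE n k).symm j, by simp⟩
  rw [Phi_apply]
  rcases lt_trichotomy (p : ℕ) (q : ℕ) with hpq | hpq | hpq
  · rw [if_pos (le_of_lt hpq)]
    have : Psi a i p q = a (encE n k ((i, p), q)) + Complex.I • a (encE n k ((i, q), p)) := by
      simp [Psi, hpq]
    rw [this, reP_mix (ha' _) (ha' _)]
  · have h2 : p = q := Fin.ext hpq
    subst h2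
    rw [if_pos le_rfl]
    have : Psi a i p p = a (encE n k ((i, p), p)) := by simp [Psi]
    rw [this, reP_of_sa (ha' _)]
  · have h1 : ¬ ((p : ℕ) ≤ (q : ℕ)) := by omega
    rw [if_neg h1]
    have : Psi a i q p = a (encE n k ((i, q), p)) + Complex.I • a (encE n k ((i, p), q)) := by
      simp [Psi, hpq]
    rw [this, imP_mix (ha' _) (ha' _)]

/-- Entries of a generating set of matrices generate `A`. -/
lemma entries_generate (hn : 1 ≤ n) (S : Set (Matrix (Fin n) (Fin n) A))
    (hS : (NonUnitalStarAlgebra.adjoin ℂ S).topologicalClosure = ⊤) :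
    (NonUnitalStarAlgebra.adjoin ℂ
      {x : A | ∃ m ∈ S, ∃ p q, m p q = x}).topologicalClosure = ⊤ := by
  set B := (NonUnitalStarAlgebra.adjoin ℂ
    {x : A | ∃ m ∈ S, ∃ p q, m p q = x}).topologicalClosure with hB
  have hBclosed : IsClosed (B : Set A) := isClosed_closure
  set T : NonUnitalStarSubalgebra ℂ (Matrix (Fin n) (Fin n) A) :=
    { carrier := {m | ∀ p q, m p q ∈ B}
      add_mem' := fun hx hy p q => by
        simpa [Matrix.add_apply] using add_mem (hx p q) (hy p q)
      zero_mem' := fun p q => by simpa using zero_mem B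
      mul_mem' := fun {x y} hx hy p q => by
        rw [Matrix.mul_apply]
        exact sum_mem fun r _ => mul_mem (hx p r) (hy r q)
      smul_mem' := fun c {x} hx p q => by
        simpa [Matrix.smul_apply] using SMulMemClass.smul_mem c (hx p q)
      star_mem' := fun {x} hx p q => by
        rw [Matrix.star_apply]
        exact star_mem (hx q p) } with hT
  have hTclosed : IsClosed (T : Set (Matrix (Fin n) (Fin n) A)) := by
    have : (T : Set (Matrix (Fin n) (Fin n) A)) =
        ⋂ p, ⋂ q, (fun m : Matrix (Fin n) (Fin n) A => m p q) ⁻¹' (B : Set A) := by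
      ext m; simp [hT, Set.mem_iInter]; rfl
    rw [this]
    exact isClosed_iInter fun p => isClosed_iInter fun q =>
      hBclosed.preimage (by fun_prop)
  have hST : S ⊆ (T : Set (Matrix (Fin n) (Fin n) A)) := by
    intro m hm p q
    exact le_trans (NonUnitalStarAlgebra.subset_adjoin ℂ _)
      (NonUnitalStarSubalgebra.le_topologicalClosure _) ⟨m, hm, p, q, rfl⟩
  have hle : (NonUnitalStarAlgebra.adjoin ℂ S).topologicalClosure ≤ T :=
    NonUnitalStarSubalgebra.topologicalClosure_minimal _
      (NonUnitalStarAlgebra.adjoin_le hST) hTclosed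
  rw [hS] at hle
  rw [eq_top_iff]
  intro x _
  have hmem : Matrix.single ⟨0, hn⟩ ⟨0, hn⟩ x ∈ T := hle (by trivial)
  have := hmem ⟨0, hn⟩ ⟨0, hn⟩
  rwa [Matrix.single_apply_same] at this

lemma Phi_generates (hn : 1 ≤ n) {b : Fin k → Matrix (Fin n) (Fin n) A}
    (hb : ∀ i, IsSelfAdjoint (b i)) (hgen : MatGenerates b) : Generates (Phi b) := by
  have hE : (NonUnitalStarAlgebra.adjoin ℂ
      {x : A | ∃ m ∈ Set.range b, ∃ p q, m p q = x}).topologicalClosure = ⊤ :=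
    entries_generate hn _ hgen
  have hsub : {x : A | ∃ m ∈ Set.range b, ∃ p q, m p q = x} ⊆
      (NonUnitalStarAlgebra.adjoin ℂ (Set.range (Phi b)) : Set A) := by
    rintro x ⟨m, ⟨i, rfl⟩, p, q, rfl⟩
    have hrep : ∀ p' q' : Fin n, ((p' : ℕ) ≤ q') →
        reP (b i p' q') ∈ NonUnitalStarAlgebra.adjoin ℂ (Set.range (Phi b)) := by
      intro p' q' hle
      have : reP (b i p' q') = Phi b (encE n k ((i, p'), q')) := by
        rw [Phi_apply, if_pos hle]
      rw [this]
      exact NonUnitalStarAlgebra.subset_adjoin ℂ _ ⟨_, rfl⟩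
    have himp : ∀ p' q' : Fin n, ((p' : ℕ) < q') →
        imP (b i p' q') ∈ NonUnitalStarAlgebra.adjoin ℂ (Set.range (Phi b)) := by
      intro p' q' hlt
      have hnle : ¬ ((q' : ℕ) ≤ (p' : ℕ)) := by omega
      have : imP (b i p' q') = Phi b (encE n k ((i, q'), p')) := by
        rw [Phi_apply, if_neg hnle]
      rw [this]
      exact NonUnitalStarAlgebra.subset_adjoin ℂ _ ⟨_, rfl⟩
    have hbsa : ∀ p' q' : Fin n, star (b i q' p') = b i p' q' := by
      intro p' q'
      conv_rhs => rw [← (hb i)]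
      rw [Matrix.star_apply]
    rcases lt_trichotomy (p : ℕ) (q : ℕ) with hpq | hpq | hpq
    · rw [← reP_add_I_smul_imP (b i p q)]
      exact add_mem (hrep p q hpq.le) (SMulMemClass.smul_mem _ (himp p q hpq))
    · have h2 : p = q := Fin.ext hpq
      subst h2
      rw [← reP_of_sa (hbsa p p)]
      exact hrep p p le_rfl
    · rw [← hbsa p q, ← reP_add_I_smul_imP (b i q p)]
      exact star_mem (add_mem (hrep q p hpq.le) (SMulMemClass.smul_mem _ (himp q p hpq)))
  have hmono : (NonUnitalStarAlgebra.adjoin ℂ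
      {x : A | ∃ m ∈ Set.range b, ∃ p q, m p q = x}).topologicalClosure ≤
      (NonUnitalStarAlgebra.adjoin ℂ (Set.range (Phi b))).topologicalClosure :=
    NonUnitalStarSubalgebra.topologicalClosure_minimal _
      (le_trans (NonUnitalStarAlgebra.adjoin_le hsub)
        (NonUnitalStarSubalgebra.le_topologicalClosure _)) isClosed_closure
  rw [hE] at hmono
  exact top_le_iff.mp hmono

end Aux

/-- Let `A` be a unital C*-algebra and `n, k ≥ 1`.  If `Gen_k(M_n(A))_sa` is
dense in `M_n(A)^k_sa`, then `Gen_{kn²}(A)_sa` is dense in `A^{kn²}_sa`.  Consequently,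
`⌈(gr(A)+1)/n²⌉ − 1 ≤ gr(A ⊗ M_n)`. -/
theorem genSa_dense_of_matrix_genSa_dense {A : Type*} [CStarAlgebra A]
    {n k : ℕ} (hn : 1 ≤ n) (hk : 1 ≤ k)
    (h : ∀ a : Fin k → Matrix (Fin n) (Fin n) A, (∀ i, IsSelfAdjoint (a i)) →
      a ∈ closure {b : Fin k → Matrix (Fin n) (Fin n) A |
        (∀ i, IsSelfAdjoint (b i)) ∧ MatGenerates b}) :
    ∀ a : Fin (k * n ^ 2) → A, (∀ i, IsSelfAdjoint (a i)) →
      a ∈ closure {b : Fin (k * n ^ 2) → A | (∀ i, IsSelfAdjoint (b i)) ∧ Generates b} := by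
  intro a ha
  have hc := h (Psi a) (Psi_sa ha)
  have hmem : Phi (Psi a) ∈ Phi '' closure {b : Fin k → Matrix (Fin n) (Fin n) A |
      (∀ i, IsSelfAdjoint (b i)) ∧ MatGenerates b} := ⟨Psi a, hc, rfl⟩
  have h2 := image_closure_subset_closure_image (Phi_continuous (A := A) (n := n) (k := k)) hmem
  rw [Phi_Psi ha] at h2
  refine closure_mono ?_ h2
  rintro x ⟨b, ⟨hbsa, hbgen⟩, rfl⟩
  exact ⟨Phi_sa b, Phi_generates hn hbsa hbgen⟩
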